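/- Let Λ be a k-graph with fundamental groupoid (𝒢(Λ), i), let p : Ω → Λ and q : Σ → Λ be connected coverings, let x be a vertex of Λ, and let v, u be vertices of Ω, Σ with p(v) = x and q(u) = x. Then there exists a morphism of coverings φ : (Ω,p) → (Σ,q) with φ(v) = u if and only if p_*π(Ω,v) ⊆ q_*π(Σ,u) as subgroups of π(Λ,x). -/

import Mathlib

/-!
Arrows-only formalization of `k`-graphs (higher-rank graphs), their coverings,
fundamental groupoids, and groupoid actions, following Pask–Quigg–Raeburn,
"Coverings of k-graphs".

A small category is encoded by its set of arrows `A` together with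
source/range maps `src rng : A → A` (whose common image is the set of
identities = vertices) and a (guarded) total composition `comp : A → A → A`,
where `comp f g` is the composite "f after g", meaningful when `src f = rng g`.
A `k`-graph additionally has a degree map `deg : A → (Fin k → ℕ)` which is
functorial and satisfies the unique factorization property.
-/

namespace KGraphCovering

/-- A `k`-graph in arrows-only form. -/
structure KGraphStruct (k : ℕ) (A : Type) : Type where
  src : A → A
  rng : A → A
  comp : A → A → A
  deg : A → (Fin k → ℕ)
  src_src : ∀ f, src (src f) = src f
  rng_src : ∀ f, rng (src f) = src f
  src_rng : ∀ f, src (rng f) = rng f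
  rng_rng : ∀ f, rng (rng f) = rng f
  comp_src_id : ∀ f, comp f (src f) = f
  rng_comp_id : ∀ f, comp (rng f) f = f
  src_comp : ∀ f g, src f = rng g → src (comp f g) = src g
  rng_comp : ∀ f g, src f = rng g → rng (comp f g) = rng f
  assoc : ∀ f g h, src f = rng g → src g = rng h →
    comp (comp f g) h = comp f (comp g h)
  deg_comp : ∀ f g, src f = rng g → deg (comp f g) = deg f + deg g
  deg_src : ∀ f, deg (src f) = 0
  factor : ∀ f m n, deg f = m + n →
    ∃! q : A × A, src q.1 = rng q.2 ∧ deg q.1 = m ∧ deg q.2 = n ∧ comp q.1 q.2 = f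

namespace KGraphStruct

variable {k : ℕ} {A : Type}

/-- The vertices (objects) are the identity arrows. -/
def IsVertex (S : KGraphStruct k A) (v : A) : Prop := S.src v = v

/-- A `k`-graph is connected if the equivalence relation generated by
"there is a morphism from `v` to `u`" relates all pairs of vertices. -/
def Connected (S : KGraphStruct k A) : Prop :=
  ∀ u v, S.IsVertex u → S.IsVertex v →
    Relation.EqvGen (fun a b => ∃ f, S.rng f = a ∧ S.src f = b) u v

end KGraphStruct

/-- A groupoid in arrows-only form. -/
structure GroupoidStruct (B : Type) : Type where
  src : B → B
  rng : B → B
  comp : B → B → B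
  inv : B → B
  src_src : ∀ f, src (src f) = src f
  rng_src : ∀ f, rng (src f) = src f
  src_rng : ∀ f, src (rng f) = rng f
  rng_rng : ∀ f, rng (rng f) = rng f
  comp_src_id : ∀ f, comp f (src f) = f
  rng_comp_id : ∀ f, comp (rng f) f = f
  src_comp : ∀ f g, src f = rng g → src (comp f g) = src g
  rng_comp : ∀ f g, src f = rng g → rng (comp f g) = rng f
  assoc : ∀ f g h, src f = rng g → src g = rng h →
    comp (comp f g) h = comp f (comp g h)
  src_inv : ∀ f, src (inv f) = rng f
  rng_inv : ∀ f, rng (inv f) = src f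
  inv_comp_self : ∀ f, comp (inv f) f = src f
  comp_inv_self : ∀ f, comp f (inv f) = rng f

namespace GroupoidStruct

variable {B : Type}

/-- The vertices (objects) of a groupoid are the identity arrows. -/
def IsVertex (G : GroupoidStruct B) (v : B) : Prop := G.src v = v

/-- A subgroup of the isotropy group `x𝒢x`, as a set of arrows. -/
def IsSubgroupAt (G : GroupoidStruct B) (x : B) (H : Set B) : Prop :=
  (∀ a ∈ H, G.src a = x ∧ G.rng a = x) ∧ x ∈ H ∧
  (∀ a ∈ H, ∀ b ∈ H, G.comp a b ∈ H) ∧ (∀ a ∈ H, G.inv a ∈ H)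

/-- `K` is a conjugate of `H` in the isotropy group at `x`. -/
def ConjAt (G : GroupoidStruct B) (x : B) (H K : Set B) : Prop :=
  ∃ g, G.src g = x ∧ G.rng g = x ∧
    K = (fun a => G.comp (G.comp g a) (G.inv g)) '' H

/-- `H` is a normal subset of the isotropy group at `x`. -/
def IsNormalAt (G : GroupoidStruct B) (x : B) (H : Set B) : Prop :=
  ∀ g, G.src g = x → G.rng g = x → ∀ a ∈ H, G.comp (G.comp g a) (G.inv g) ∈ H

/-- The normalizer of `H` in the isotropy group at `x`. -/
def normalizerAt (G : GroupoidStruct B) (x : B) (H : Set B) : Set B :=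
  {g | G.src g = x ∧ G.rng g = x ∧
    (fun a => G.comp (G.comp g a) (G.inv g)) '' H = H}

end GroupoidStruct

/-- `f` is a morphism of `k`-graphs (a degree-preserving functor). -/
def IsKGraphHomFun {k : ℕ} {A A' : Type} (S : KGraphStruct k A)
    (T : KGraphStruct k A') (f : A → A') : Prop :=
  (∀ a, f (S.src a) = T.src (f a)) ∧
  (∀ a, f (S.rng a) = T.rng (f a)) ∧
  (∀ a b, S.src a = S.rng b → f (S.comp a b) = T.comp (f a) (f b)) ∧
  (∀ a, T.deg (f a) = S.deg a)

/-- `f` is a functor from a `k`-graph to a groupoid. -/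
def IsFunctorToGpdFun {k : ℕ} {A B : Type} (S : KGraphStruct k A)
    (G : GroupoidStruct B) (f : A → B) : Prop :=
  (∀ a, f (S.src a) = G.src (f a)) ∧
  (∀ a, f (S.rng a) = G.rng (f a)) ∧
  (∀ a b, S.src a = S.rng b → f (S.comp a b) = G.comp (f a) (f b))

/-- `f` is a morphism of groupoids (a functor). -/
def IsGpdHomFun {B C : Type} (G : GroupoidStruct B) (H : GroupoidStruct C)
    (f : B → C) : Prop :=
  (∀ a, f (G.src a) = H.src (f a)) ∧
  (∀ a, f (G.rng a) = H.rng (f a)) ∧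
  (∀ a b, G.src a = G.rng b → f (G.comp a b) = H.comp (f a) (f b))

/-- `p : Ω → Λ` is a covering of `k`-graphs: a surjective `k`-graph morphism
which maps `Ωv` bijectively onto `Λp(v)` and `vΩ` bijectively onto `p(v)Λ`
for every vertex `v` of `Ω`. -/
structure IsCovering {k : ℕ} {A A' : Type} (S : KGraphStruct k A')
    (T : KGraphStruct k A) (p : A' → A) : Prop where
  hom : IsKGraphHomFun S T p
  surj : Function.Surjective p
  src_inj : ∀ a b, S.src a = S.src b → p a = p b → a = b
  src_lift : ∀ v, S.IsVertex v → ∀ g, T.src g = p v → ∃ a, S.src a = v ∧ p a = g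
  rng_inj : ∀ a b, S.rng a = S.rng b → p a = p b → a = b
  rng_lift : ∀ v, S.IsVertex v → ∀ g, T.rng g = p v → ∃ a, S.rng a = v ∧ p a = g

/-- A fundamental groupoid of a `k`-graph `S`: a groupoid `G` whose object
set is identified with the vertex set of `S` via the canonical functor `i`
(which is bijective on objects), with the universal property that every
functor from `S` to a groupoid factors uniquely through `i`. -/
structure FundamentalGroupoid {k : ℕ} {A : Type} (S : KGraphStruct k A) :
    Type 1 where
  B : Type
  G : GroupoidStruct B
  i : A → B
  i_hom : IsFunctorToGpdFun S G i
  obj_bij : ∀ w, G.IsVertex w → ∃! v, S.IsVertex v ∧ i v = w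
  univ : ∀ {C : Type} (H : GroupoidStruct C) (F : A → C),
    IsFunctorToGpdFun S H F →
    ∃! F' : B → C, IsGpdHomFun G H F' ∧ ∀ a, F' (i a) = F a

/-- The fundamental group `π(Λ,x)` at a vertex `x`, as the isotropy of the
fundamental groupoid at `i x`. -/
def FundamentalGroupoid.pi1 {k : ℕ} {A : Type} {S : KGraphStruct k A}
    (F : FundamentalGroupoid S) (x : A) : Set F.B :=
  {a | F.G.src a = F.i x ∧ F.G.rng a = F.i x}

/-- An automorphism of the covering `p : Ω → Λ`. -/
def IsCoveringAut {k : ℕ} {A A' : Type} (Ω : KGraphStruct k A')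
    (Λ : KGraphStruct k A) (p : A' → A) (φ : A' → A') : Prop :=
  Function.Bijective φ ∧ IsKGraphHomFun Ω Ω φ ∧ ∀ a, p (φ a) = p a

/-- The action of the fundamental groupoid `F = 𝒢(Λ)` on the vertex set of a
covering `p : Ω → Λ`, determined by `i(p(λ)) ⬝ s(λ) = r(λ)`.  The fiber of a
vertex `w` of `Ω` is over the object `F.i (p w)`. -/
structure CorrespondingAction {k : ℕ} {A A' : Type} (Ω : KGraphStruct k A')
    (Λ : KGraphStruct k A) (F : FundamentalGroupoid Λ) (p : A' → A)
    (act : F.B → A' → A') : Prop where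
  act_vertex : ∀ a w, Ω.IsVertex w → F.G.src a = F.i (p w) →
    Ω.IsVertex (act a w) ∧ F.i (p (act a w)) = F.G.rng a
  act_id : ∀ w, Ω.IsVertex w → act (F.i (p w)) w = w
  act_comp : ∀ a b w, Ω.IsVertex w → F.G.src b = F.i (p w) →
    F.G.src a = F.G.rng b → act (F.G.comp a b) w = act a (act b w)
  act_cov : ∀ lam, act (F.i (p lam)) (Ω.src lam) = Ω.rng lam

/-- An action of a groupoid `G` on a set `V`, presented by an anchor map
`fib : V → B` (landing in vertices) and a guarded action map. -/
structure GpdActionStruct {B : Type} (G : GroupoidStruct B) (V : Type) :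
    Type where
  fib : V → B
  act : B → V → V
  fib_vertex : ∀ v, G.src (fib v) = fib v
  act_fib : ∀ a v, G.src a = fib v → fib (act a v) = G.rng a
  act_id : ∀ v, act (fib v) v = v
  act_comp : ∀ a b v, G.src b = fib v → G.src a = G.rng b →
    act (G.comp a b) v = act a (act b v)

namespace GpdActionStruct

variable {B V W : Type} {G : GroupoidStruct B}

/-- Transitivity of a groupoid action. -/
def Transitive (ρ : GpdActionStruct G V) : Prop :=
  ∀ u v : V, ∃ a, G.src a = ρ.fib v ∧ ρ.act a v = u

/-- The stability group of the action at `v`. -/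
def stab (ρ : GpdActionStruct G V) (v : V) : Set B :=
  {a | G.src a = ρ.fib v ∧ G.rng a = ρ.fib v ∧ ρ.act a v = v}

/-- Freeness of a groupoid action: all stability groups are trivial. -/
def Free (ρ : GpdActionStruct G V) : Prop :=
  ∀ (v : V) (a : B), a ∈ ρ.stab v → a = ρ.fib v

end GpdActionStruct

/-- A morphism of actions of the groupoid `G`: a fiber-preserving
equivariant map. -/
def IsActionHom {B V W : Type} {G : GroupoidStruct B}
    (ρ : GpdActionStruct G V) (σ : GpdActionStruct G W) (φ : V → W) : Prop :=
  (∀ v, σ.fib (φ v) = ρ.fib v) ∧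
  ∀ a v, G.src a = ρ.fib v → φ (ρ.act a v) = σ.act a (φ v)

/-- An automorphism of an action of the groupoid `G`. -/
def IsActionAut {B V : Type} {G : GroupoidStruct B}
    (ρ : GpdActionStruct G V) (φ : V → V) : Prop :=
  Function.Bijective φ ∧ IsActionHom ρ ρ φ

/-- A universal covering: a connected covering admitting a morphism of
coverings to every connected covering of the base. -/
def IsUniversalCovering {k : ℕ} {A A' : Type} (Ω : KGraphStruct k A')
    (Λ : KGraphStruct k A) (p : A' → A) : Prop :=
  IsCovering Ω Λ p ∧ Ω.Connected ∧
  ∀ (A'' : Type) (Sg : KGraphStruct k A'') (q : A'' → A),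
    IsCovering Sg Λ q → Sg.Connected →
    ∃ φ : A' → A'', IsKGraphHomFun Ω Sg φ ∧ ∀ a, q (φ a) = p a

end KGraphCovering

namespace KGraphCovering

/-!
A morphism of coverings `φ` induces `φ_* : 𝒢(Ω) → 𝒢(Σ)` with `q_* ∘ φ_* = p_*`, whence the
inclusion. Conversely, unique lifting turns each arrow `λ` of `Λ` into a bijection from the vertices
of `Σ` over `s(λ)` onto those over `r(λ)`; by the universal property this monodromy extends to an
action of `𝒢(Λ)` on the vertices of `Σ`, in which `q_* h` moves the source of each arrow `h` of
`𝒢(Σ)` to its range, so that `q_*π(Σ,u)` fixes `u`. If `p_*π(Ω,v) ⊆ q_*π(Σ,u)`, the vertex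
`p_* g ⬝ u` for an arrow `g : v → w` of `𝒢(Ω)` depends only on `w`, and it exists for every `w`
since `Ω` is connected. Lifting the arrows of `Ω` from these vertices gives `φ`.
-/

section

variable {k : ℕ} {A A' A'' : Type}

theorem KGraphStruct.rng_eq_self_of_isVertex (S : KGraphStruct k A) {w : A}
    (h : S.IsVertex w) : S.rng w = w := by
  have := S.rng_src w
  rwa [h] at this

namespace GroupoidStruct

variable {B : Type} (G : GroupoidStruct B)

theorem comp_inv_cancel_left {g g' : B} (h : G.rng g = G.rng g') :
    G.comp g' (G.comp (G.inv g') g) = g := by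
  rw [← G.assoc g' (G.inv g') g (G.rng_inv g').symm (by rw [G.src_inv, h]),
    G.comp_inv_self, ← h, G.rng_comp_id]

variable {G} {P : B → Prop}

-- `src g = g⁻¹ g` and `rng g = g g⁻¹` satisfy `P` along with `g`.
open Classical in
noncomputable def subgroupoid (hcomp : ∀ g h, G.src g = G.rng h → P g → P h → P (G.comp g h))
    (hinv : ∀ g, P g → P (G.inv g)) : GroupoidStruct {g // P g} where
  src t := ⟨G.src t, G.inv_comp_self t ▸ hcomp _ _ (G.src_inv t) (hinv _ t.2) t.2⟩
  rng t := ⟨G.rng t, G.comp_inv_self t ▸ hcomp _ _ (G.rng_inv t).symm t.2 (hinv _ t.2)⟩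
  comp s t := if h : G.src s = G.rng t then ⟨G.comp s t, hcomp _ _ h s.2 t.2⟩ else s
  inv t := ⟨G.inv t, hinv _ t.2⟩
  src_src t := Subtype.ext (G.src_src t)
  rng_src t := Subtype.ext (G.rng_src t)
  src_rng t := Subtype.ext (G.src_rng t)
  rng_rng t := Subtype.ext (G.rng_rng t)
  comp_src_id t := by
    rw [dif_pos (G.rng_src t.1).symm]
    exact Subtype.ext (G.comp_src_id t)
  rng_comp_id t := by
    rw [dif_pos (G.src_rng t.1)]
    exact Subtype.ext (G.rng_comp_id t)
  src_comp s t h := by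
    have h : G.src s = G.rng t := congrArg Subtype.val h
    rw [dif_pos h]
    exact Subtype.ext (G.src_comp _ _ h)
  rng_comp s t h := by
    have h : G.src s = G.rng t := congrArg Subtype.val h
    rw [dif_pos h]
    exact Subtype.ext (G.rng_comp _ _ h)
  assoc f g h hfg hgh := by
    have hfg : G.src f = G.rng g := congrArg Subtype.val hfg
    have hgh : G.src g = G.rng h := congrArg Subtype.val hgh
    rw [dif_pos hfg, dif_pos hgh, dif_pos (by exact (G.src_comp _ _ hfg).trans hgh),
      dif_pos (by exact hfg.trans (G.rng_comp _ _ hgh).symm)]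
    exact Subtype.ext (G.assoc _ _ _ hfg hgh)
  src_inv t := Subtype.ext (G.src_inv t)
  rng_inv t := Subtype.ext (G.rng_inv t)
  inv_comp_self t := by
    rw [dif_pos (G.src_inv t.1)]
    exact Subtype.ext (G.inv_comp_self t)
  comp_inv_self t := by
    rw [dif_pos (G.rng_inv t.1).symm]
    exact Subtype.ext (G.comp_inv_self t)

variable (hcomp : ∀ g h, G.src g = G.rng h → P g → P h → P (G.comp g h))
  (hinv : ∀ g, P g → P (G.inv g))

theorem subgroupoid_comp {s t : {g // P g}} (h : G.src s = G.rng t) :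
    (subgroupoid hcomp hinv).comp s t = ⟨G.comp s t, hcomp _ _ h s.2 t.2⟩ :=
  dif_pos h

theorem isGpdHomFun_subtype_val : IsGpdHomFun (subgroupoid hcomp hinv) G Subtype.val :=
  ⟨fun _ => rfl, fun _ => rfl, fun s t h => by
    rw [subgroupoid_comp hcomp hinv (congrArg Subtype.val h : G.src s = G.rng t)]⟩

end GroupoidStruct

theorem IsGpdHomFun.comp {B C D : Type} {G : GroupoidStruct B} {H : GroupoidStruct C}
    {K : GroupoidStruct D} {g : C → D} {f : B → C} (hg : IsGpdHomFun H K g)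
    (hf : IsGpdHomFun G H f) : IsGpdHomFun G K (g ∘ f) :=
  ⟨fun a => by simp only [Function.comp_apply, hf.1, hg.1],
   fun a => by simp only [Function.comp_apply, hf.2.1, hg.2.1],
   fun a b h => by
    simp only [Function.comp_apply, hf.2.2 a b h,
      hg.2.2 _ _ (by rw [← hf.1, ← hf.2.1, h])]⟩

theorem IsGpdHomFun.comp_isFunctorToGpdFun {S : KGraphStruct k A} {B C : Type}
    {G : GroupoidStruct B} {H : GroupoidStruct C} {g : B → C} {f : A → B}
    (hg : IsGpdHomFun G H g) (hf : IsFunctorToGpdFun S G f) :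
    IsFunctorToGpdFun S H (g ∘ f) :=
  ⟨fun a => by simp only [Function.comp_apply, hf.1, hg.1],
   fun a => by simp only [Function.comp_apply, hf.2.1, hg.2.1],
   fun a b h => by
    simp only [Function.comp_apply, hf.2.2 a b h,
      hg.2.2 _ _ (by rw [← hf.1, ← hf.2.1, h])]⟩

theorem IsFunctorToGpdFun.comp_isKGraphHomFun {S : KGraphStruct k A} {T : KGraphStruct k A'}
    {B : Type} {G : GroupoidStruct B} {g : A' → B} {f : A → A'}
    (hg : IsFunctorToGpdFun T G g) (hf : IsKGraphHomFun S T f) :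
    IsFunctorToGpdFun S G (g ∘ f) :=
  ⟨fun a => by simp only [Function.comp_apply, hf.1, hg.1],
   fun a => by simp only [Function.comp_apply, hf.2.1, hg.2.1],
   fun a b h => by
    simp only [Function.comp_apply, hf.2.2.1 a b h,
      hg.2.2 _ _ (by rw [← hf.1, ← hf.2.1, h])]⟩

theorem IsKGraphHomFun.isVertex {S : KGraphStruct k A} {T : KGraphStruct k A'} {f : A → A'}
    (hf : IsKGraphHomFun S T f) {w : A} (hw : S.IsVertex w) : T.IsVertex (f w) := by
  change T.src (f w) = f w
  rw [← hf.1, hw]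

namespace FundamentalGroupoid

variable {S : KGraphStruct k A} (F : FundamentalGroupoid S)

theorem isVertex_i {w : A} (hw : S.IsVertex w) : F.G.IsVertex (F.i w) := by
  change F.G.src (F.i w) = F.i w
  rw [← F.i_hom.1, hw]

theorem rng_i_of_isVertex {w : A} (hw : S.IsVertex w) : F.G.rng (F.i w) = F.i w := by
  rw [← F.i_hom.2.1, S.rng_eq_self_of_isVertex hw]

theorem i_injOn {a b : A} (ha : S.IsVertex a) (hb : S.IsVertex b) (h : F.i a = F.i b) :
    a = b :=
  (F.obj_bij _ (F.isVertex_i ha)).unique ⟨ha, rfl⟩ ⟨hb, h.symm⟩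

theorem hom_ext {C : Type} {H : GroupoidStruct C} {f g : F.B → C}
    (hf : IsGpdHomFun F.G H f) (hg : IsGpdHomFun F.G H g) (hfg : ∀ a, f (F.i a) = g (F.i a)) :
    f = g :=
  (F.univ H (f ∘ F.i) (hf.comp_isFunctorToGpdFun F.i_hom)).unique ⟨hf, fun _ => rfl⟩
    ⟨hg, fun a => (hfg a).symm⟩

theorem exists_map {T : KGraphStruct k A'} (F' : FundamentalGroupoid T) {f : A → A'}
    (hf : IsKGraphHomFun S T f) :
    ∃ f' : F.B → F'.B, IsGpdHomFun F.G F'.G f' ∧ ∀ a, f' (F.i a) = F'.i (f a) :=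
  (F.univ F'.G (F'.i ∘ f) (F'.i_hom.comp_isKGraphHomFun hf)).exists

/-- The arrows of `F.G` satisfying `P` form a subgroupoid containing the image of `F.i`,
onto which the universal property retracts `F.G`. -/
theorem induction (P : F.B → Prop) (hi : ∀ a, P (F.i a))
    (hcomp : ∀ g h, F.G.src g = F.G.rng h → P g → P h → P (F.G.comp g h))
    (hinv : ∀ g, P g → P (F.G.inv g)) (g : F.B) : P g := by
  have hi' : IsFunctorToGpdFun S (GroupoidStruct.subgroupoid hcomp hinv) (fun a => ⟨F.i a, hi a⟩) :=
    ⟨fun a => Subtype.ext (F.i_hom.1 a), fun a => Subtype.ext (F.i_hom.2.1 a),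
     fun a b h => by
      have h' : F.G.src (F.i a) = F.G.rng (F.i b) := by rw [← F.i_hom.1, ← F.i_hom.2.1, h]
      rw [GroupoidStruct.subgroupoid_comp hcomp hinv h']
      exact Subtype.ext (F.i_hom.2.2 a b h)⟩
  obtain ⟨r, hr, hri⟩ := (F.univ _ _ hi').exists
  have hid : Subtype.val ∘ r = id :=
    F.hom_ext ((GroupoidStruct.isGpdHomFun_subtype_val hcomp hinv).comp hr)
      ⟨fun _ => rfl, fun _ => rfl, fun _ _ _ => rfl⟩ fun a => by simp [hri]
  simpa only [show (r g).val = g from congrFun hid g] using (r g).2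

theorem exists_arrow_of_connected (hS : S.Connected) {v w : A} (hv : S.IsVertex v)
    (hw : S.IsVertex w) : ∃ g, F.G.src g = F.i v ∧ F.G.rng g = F.i w := by
  suffices key : ∀ a b, Relation.EqvGen (fun a b => ∃ f, S.rng f = a ∧ S.src f = b) a b →
      ∃ g, F.G.src g = F.i (S.src b) ∧ F.G.rng g = F.i (S.src a) by
    simpa only [show S.src v = v from hv, show S.src w = w from hw] using key w v (hS w v hw hv)
  intro a b hab
  induction hab with
  | rel a b h =>
    obtain ⟨f, rfl, rfl⟩ := h
    exact ⟨F.i f, by rw [← F.i_hom.1, S.src_src], by rw [← F.i_hom.2.1, S.src_rng]⟩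
  | refl a =>
    exact ⟨F.i (S.src a), F.isVertex_i (S.src_src a),
      F.rng_i_of_isVertex (S.src_src a)⟩
  | symm a b _ ih =>
    obtain ⟨g, hs, hr⟩ := ih
    exact ⟨F.G.inv g, by rw [F.G.src_inv, hr], by rw [F.G.rng_inv, hs]⟩
  | trans a b c _ _ ih₁ ih₂ =>
    obtain ⟨g₁, hs₁, hr₁⟩ := ih₁
    obtain ⟨g₂, hs₂, hr₂⟩ := ih₂
    exact ⟨F.G.comp g₁ g₂, by rw [F.G.src_comp _ _ (hs₁.trans hr₂.symm), hs₂],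
      by rw [F.G.rng_comp _ _ (hs₁.trans hr₂.symm), hr₁]⟩

end FundamentalGroupoid

section BijGroupoid

variable {ι V : Type} (S : ι → Set V)

/-- `⟨y, x, f⟩` is a bijection `f : S x ≃ S y`. -/
abbrev BijArrow : Type := Σ y x : ι, S x ≃ S y

variable {S}

theorem BijArrow.mk_eq_mk {y y' x x' : ι} (hy : y = y') (hx : x = x') {f : S x ≃ S y}
    {f' : S x' ≃ S y'} (hf : ∀ w (hw : w ∈ S x), (f ⟨w, hw⟩ : V) = f' ⟨w, hx ▸ hw⟩) :
    (⟨y, x, f⟩ : BijArrow S) = ⟨y', x', f'⟩ := by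
  subst hy hx
  congr
  ext ⟨w, hw⟩
  exact hf w hw

open Classical in
noncomputable def BijArrow.comp (s t : BijArrow S) : BijArrow S :=
  if h : t.1 = s.2.1 then ⟨s.1, t.2.1, (t.2.2.trans (Equiv.setCongr (congrArg S h))).trans s.2.2⟩
  else s

theorem BijArrow.comp_of {s t : BijArrow S} (h : t.1 = s.2.1) :
    s.comp t = ⟨s.1, t.2.1, (t.2.2.trans (Equiv.setCongr (congrArg S h))).trans s.2.2⟩ :=
  dif_pos h

variable (S)

noncomputable def bijGroupoid : GroupoidStruct (BijArrow S) where
  src t := ⟨t.2.1, t.2.1, Equiv.refl _⟩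
  rng t := ⟨t.1, t.1, Equiv.refl _⟩
  comp := BijArrow.comp
  inv t := ⟨t.2.1, t.1, t.2.2.symm⟩
  src_src _ := rfl
  rng_src _ := rfl
  src_rng _ := rfl
  rng_rng _ := rfl
  comp_src_id s := by
    rw [BijArrow.comp_of rfl]
    exact BijArrow.mk_eq_mk rfl rfl fun _ _ => rfl
  rng_comp_id s := by
    rw [BijArrow.comp_of rfl]
    exact BijArrow.mk_eq_mk rfl rfl fun _ _ => rfl
  src_comp s t h := by rw [BijArrow.comp_of (s := s) (t := t) (congrArg Sigma.fst h).symm]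
  rng_comp s t h := by rw [BijArrow.comp_of (s := s) (t := t) (congrArg Sigma.fst h).symm]
  assoc f g h hfg hgh := by
    have hfg : g.1 = f.2.1 := (congrArg Sigma.fst hfg).symm
    have hgh : h.1 = g.2.1 := (congrArg Sigma.fst hgh).symm
    rw [BijArrow.comp_of (s := f) (t := g) hfg, BijArrow.comp_of (s := g) (t := h) hgh,
      BijArrow.comp_of (s := ⟨f.1, g.2.1, _⟩) (t := h) hgh,
      BijArrow.comp_of (s := f) (t := ⟨g.1, h.2.1, _⟩) hfg]
    exact BijArrow.mk_eq_mk rfl rfl fun _ _ => rfl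
  src_inv _ := rfl
  rng_inv _ := rfl
  inv_comp_self t := by
    rw [BijArrow.comp_of rfl]
    exact BijArrow.mk_eq_mk rfl rfl fun w hw =>
      congrArg Subtype.val (t.2.2.symm_apply_apply ⟨w, hw⟩)
  comp_inv_self t := by
    rw [BijArrow.comp_of rfl]
    exact BijArrow.mk_eq_mk rfl rfl fun w hw =>
      congrArg Subtype.val (t.2.2.apply_symm_apply ⟨w, hw⟩)

open Classical in
noncomputable def bijAct (t : BijArrow S) (w : V) : V :=
  if h : w ∈ S t.2.1 then t.2.2 ⟨w, h⟩ else w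

variable {S}

theorem bijAct_of_mem {t : BijArrow S} {w : V} (h : w ∈ S t.2.1) :
    bijAct S t w = t.2.2 ⟨w, h⟩ :=
  dif_pos h

theorem bijAct_mem {t : BijArrow S} {w : V} (h : w ∈ S t.2.1) : bijAct S t w ∈ S t.1 := by
  rw [bijAct_of_mem h]
  exact Subtype.prop _

theorem bijAct_src (t : BijArrow S) (w : V) : bijAct S ((bijGroupoid S).src t) w = w := by
  unfold bijAct
  split_ifs <;> rfl

theorem bijAct_comp {s t : BijArrow S} (hst : t.1 = s.2.1) {w : V} (hw : w ∈ S t.2.1) :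
    bijAct S ((bijGroupoid S).comp s t) w = bijAct S s (bijAct S t w) := by
  have hw' : bijAct S t w ∈ S s.2.1 := hst ▸ bijAct_mem hw
  change bijAct S (s.comp t) w = _
  rw [bijAct_of_mem hw', BijArrow.comp_of hst, bijAct_of_mem (t := ⟨s.1, t.2.1, _⟩) hw]
  simp only [Equiv.trans_apply, Equiv.setCongr_apply, bijAct_of_mem hw]

end BijGroupoid

section Monodromy

variable {Λ : KGraphStruct k A} {Sg : KGraphStruct k A''} {q : A'' → A}

def vertexFiber (Sg : KGraphStruct k A'') (q : A'' → A) (x : A) : Set A'' :=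
  {w | Sg.IsVertex w ∧ q w = x}

/-- The lift of `lam` with source `w`; an arbitrary arrow if there is none. -/
noncomputable def liftFrom (Sg : KGraphStruct k A'') (q : A'' → A) (lam : A) (w : A'') : A'' :=
  @Classical.epsilon _ ⟨w⟩ fun a => Sg.src a = w ∧ q a = lam

namespace IsCovering

variable (hq : IsCovering Sg Λ q)
include hq

theorem liftFrom_spec {lam : A} {w : A''} (hw : w ∈ vertexFiber Sg q (Λ.src lam)) :
    Sg.src (liftFrom Sg q lam w) = w ∧ q (liftFrom Sg q lam w) = lam :=
  Classical.epsilon_spec (hq.src_lift w hw.1 lam hw.2.symm)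

theorem liftFrom_eq {lam : A} {w a : A''} (ha : Sg.src a = w) (hqa : q a = lam) :
    liftFrom Sg q lam w = a :=
  have spec := Classical.epsilon_spec (p := fun a => Sg.src a = w ∧ q a = lam) ⟨a, ha, hqa⟩
  hq.src_inj _ _ (spec.1.trans ha.symm) (spec.2.trans hqa.symm)

theorem rng_liftFrom_mem {lam : A} {w : A''} (hw : w ∈ vertexFiber Sg q (Λ.src lam)) :
    Sg.rng (liftFrom Sg q lam w) ∈ vertexFiber Sg q (Λ.rng lam) :=
  ⟨Sg.src_rng _, by rw [hq.hom.2.1, (hq.liftFrom_spec hw).2]⟩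

theorem bijective_rng_liftFrom (lam : A) :
    Function.Bijective fun w : vertexFiber Sg q (Λ.src lam) =>
      (⟨Sg.rng (liftFrom Sg q lam w), hq.rng_liftFrom_mem w.2⟩ : vertexFiber Sg q (Λ.rng lam)) := by
  constructor
  · rintro ⟨w₁, hw₁⟩ ⟨w₂, hw₂⟩ h
    obtain ⟨hs₁, hq₁⟩ := hq.liftFrom_spec hw₁
    obtain ⟨hs₂, hq₂⟩ := hq.liftFrom_spec hw₂
    have := hq.rng_inj _ _ (congrArg Subtype.val h) (hq₁.trans hq₂.symm)
    exact Subtype.ext (hs₁.symm.trans ((congrArg Sg.src this).trans hs₂))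
  · rintro ⟨w, hw⟩
    obtain ⟨a, ha, hqa⟩ := hq.rng_lift w hw.1 lam hw.2.symm
    refine ⟨⟨Sg.src a, Sg.src_src a, by rw [hq.hom.1, hqa]⟩, Subtype.ext ?_⟩
    simp only [hq.liftFrom_eq rfl hqa, ha]

noncomputable def transport (lam : A) :
    vertexFiber Sg q (Λ.src lam) ≃ vertexFiber Sg q (Λ.rng lam) :=
  Equiv.ofBijective _ (hq.bijective_rng_liftFrom lam)

theorem transport_coe (lam : A) (w : vertexFiber Sg q (Λ.src lam)) :
    (hq.transport lam w : A'') = Sg.rng (liftFrom Sg q lam w) :=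
  rfl

noncomputable def monodromy (lam : A) : BijArrow (vertexFiber Sg q) :=
  ⟨Λ.rng lam, Λ.src lam, hq.transport lam⟩

theorem monodromy_of_isVertex {x : A} (hx : Λ.IsVertex x) :
    hq.monodromy x = ⟨x, x, Equiv.refl _⟩ :=
  BijArrow.mk_eq_mk (Λ.rng_eq_self_of_isVertex hx) hx fun w hw => by
    rw [transport_coe, hq.liftFrom_eq hw.1 (hw.2.trans hx), Sg.rng_eq_self_of_isVertex hw.1]
    rfl

theorem isFunctorToGpdFun_monodromy :
    IsFunctorToGpdFun Λ (bijGroupoid (vertexFiber Sg q)) hq.monodromy := by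
  refine ⟨fun a => hq.monodromy_of_isVertex (Λ.src_src a),
    fun a => hq.monodromy_of_isVertex (Λ.src_rng a), fun a b hab => ?_⟩
  change _ = BijArrow.comp _ _
  rw [BijArrow.comp_of (s := hq.monodromy a) (t := hq.monodromy b) hab.symm]
  refine BijArrow.mk_eq_mk (Λ.rng_comp a b hab) (Λ.src_comp a b hab) fun w hw => ?_
  have hwb : w ∈ vertexFiber Sg q (Λ.src b) := ⟨hw.1, hw.2.trans (Λ.src_comp a b hab)⟩
  obtain ⟨hb's, hb'q⟩ := hq.liftFrom_spec hwb
  have hb'r : Sg.rng (liftFrom Sg q b w) ∈ vertexFiber Sg q (Λ.src a) :=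
    hab ▸ hq.rng_liftFrom_mem hwb
  obtain ⟨ha's, ha'q⟩ := hq.liftFrom_spec hb'r
  simp only [monodromy, transport_coe, Equiv.trans_apply]
  rw [hq.liftFrom_eq (by rw [Sg.src_comp _ _ ha's, hb's])
    (by rw [hq.hom.2.2.1 _ _ ha's, ha'q, hb'q]), Sg.rng_comp _ _ ha's]
  rfl

end IsCovering

end Monodromy

section Action

variable {Λ : KGraphStruct k A} {Sg : KGraphStruct k A''} {q : A'' → A}
  {F : FundamentalGroupoid Λ}

theorem IsCovering.exists_correspondingAction (hq : IsCovering Sg Λ q)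
    (F : FundamentalGroupoid Λ) : ∃ act, CorrespondingAction Sg Λ F q act := by
  obtain ⟨M, hM, hMi⟩ := (F.univ _ _ hq.isFunctorToGpdFun_monodromy).exists
  have hM_i : ∀ {x}, Λ.IsVertex x → M (F.i x) = ⟨x, x, Equiv.refl _⟩ := fun hx =>
    (hMi _).trans (hq.monodromy_of_isVertex hx)
  have hdom : ∀ {g w}, Sg.IsVertex w → F.G.src g = F.i (q w) →
      w ∈ vertexFiber Sg q (M g).2.1 := fun {g w} hw hg =>
    ⟨hw, (congrArg Sigma.fst ((hM.1 g).symm.trans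
      ((congrArg M hg).trans (hM_i (hq.hom.isVertex hw))))).symm⟩
  refine ⟨fun g w => bijAct _ (M g) w, ⟨fun g w hw hg => ?_, fun w hw => ?_,
    fun g h w hw hh hgh => ?_, fun lam => ?_⟩⟩
  · obtain ⟨z, ⟨hz, hzg⟩, -⟩ := F.obj_bij (F.G.rng g) (F.G.src_rng g)
    have hcod : (M g).1 = z :=
      congrArg Sigma.fst ((hM.2.1 g).symm.trans ((congrArg M hzg.symm).trans (hM_i hz)))
    obtain ⟨hv, hqv⟩ := bijAct_mem (hdom hw hg)
    exact ⟨hv, by rw [hqv, hcod, hzg]⟩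
  · rw [hM_i (hq.hom.isVertex hw)]
    exact bijAct_src (⟨q w, q w, Equiv.refl _⟩ : BijArrow _) w
  · rw [hM.2.2 g h hgh]
    exact bijAct_comp (s := M g) (t := M h) (congrArg Sigma.fst ((hM.1 g).symm.trans
      ((congrArg M hgh).trans (hM.2.1 h)))).symm (hdom hw hh)
  · have hlam : Sg.src lam ∈ vertexFiber Sg q (Λ.src (q lam)) := ⟨Sg.src_src lam, hq.hom.1 lam⟩
    change bijAct _ _ _ = _
    rw [hMi, bijAct_of_mem hlam]
    exact congrArg Sg.rng (hq.liftFrom_eq rfl rfl)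

namespace CorrespondingAction

variable {act : F.B → A'' → A''} (hact : CorrespondingAction Sg Λ F q act)
  {FS : FundamentalGroupoid Sg} {qst : FS.B → F.B} (hqst : IsGpdHomFun FS.G F.G qst)
  (hqsti : ∀ a, qst (FS.i a) = F.i (q a))
include hact hqst hqsti

/-- The arrows `h` with this property form a subgroupoid containing the generators `FS.i σ`. -/
theorem act_map (h : FS.B) {w₀ w₁ : A''} (hw₀ : Sg.IsVertex w₀) (hw₁ : Sg.IsVertex w₁)
    (hs : FS.G.src h = FS.i w₀) (hr : FS.G.rng h = FS.i w₁) : act (qst h) w₀ = w₁ := by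
  have hsrc : ∀ {h w}, FS.G.src h = FS.i w → F.G.src (qst h) = F.i (q w) := fun hs => by
    rw [← hqst.1, hs, hqsti]
  induction h using FS.induction generalizing w₀ w₁ with
  | hi σ =>
    rw [← FS.i_hom.1] at hs
    rw [← FS.i_hom.2.1] at hr
    rw [← FS.i_injOn (Sg.src_src σ) hw₀ hs, ← FS.i_injOn (Sg.src_rng σ) hw₁ hr, hqsti]
    exact hact.act_cov σ
  | hcomp g h hgh ihg ihh =>
    obtain ⟨w, ⟨hw, hwh⟩, -⟩ := FS.obj_bij (FS.G.rng h) (FS.G.src_rng h)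
    rw [FS.G.src_comp _ _ hgh] at hs
    rw [FS.G.rng_comp _ _ hgh] at hr
    rw [hqst.2.2 _ _ hgh, hact.act_comp _ _ _ hw₀ (hsrc hs)
      (by rw [← hqst.1, ← hqst.2.1, hgh]), ihh hw₀ hw hs hwh.symm]
    exact ihg hw hw₁ (hgh.trans hwh.symm) hr
  | hinv h ih =>
    rw [FS.G.src_inv] at hs
    rw [FS.G.rng_inv] at hr
    have hinvh : FS.G.src (FS.G.inv h) = FS.G.rng h := FS.G.src_inv h
    rw [← ih hw₁ hw₀ hr hs, ← hact.act_comp _ _ _ hw₁ (hsrc hr)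
      (by rw [← hqst.1, ← hqst.2.1, hinvh]), ← hqst.2.2 _ _ hinvh, FS.G.inv_comp_self, hr,
      hqsti]
    exact hact.act_id w₁ hw₁

theorem act_eq_self_of_mem_image {u : A''} (hu : Sg.IsVertex u) {g : F.B}
    (hg : g ∈ qst '' FS.pi1 u) : act g u = u := by
  obtain ⟨h, ⟨hs, hr⟩, rfl⟩ := hg
  exact hact.act_map hqst hqsti h hu hu hs hr

end CorrespondingAction

end Action

section Lifting

variable {Λ : KGraphStruct k A} {Ω : KGraphStruct k A'} {Sg : KGraphStruct k A''}
  {p : A' → A} {q : A'' → A}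

theorem IsCovering.exists_lift_of_vertexMap (hq : IsCovering Sg Λ q)
    (hp : IsKGraphHomFun Ω Λ p) (φ₀ : A' → A'')
    (hφ₀ : ∀ w, Ω.IsVertex w → φ₀ w ∈ vertexFiber Sg q (p w))
    (hrng : ∀ a b, Sg.src b = φ₀ (Ω.src a) → q b = p a → Sg.rng b = φ₀ (Ω.rng a)) :
    ∃ φ : A' → A'', IsKGraphHomFun Ω Sg φ ∧ (∀ a, q (φ a) = p a) ∧
      ∀ w, Ω.IsVertex w → φ w = φ₀ w := by
  have hmem : ∀ a, φ₀ (Ω.src a) ∈ vertexFiber Sg q (Λ.src (p a)) := fun a =>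
    hp.1 a ▸ hφ₀ _ (Ω.src_src a)
  set φ := fun a => liftFrom Sg q (p a) (φ₀ (Ω.src a))
  have hsrc : ∀ a, Sg.src (φ a) = φ₀ (Ω.src a) := fun a => (hq.liftFrom_spec (hmem a)).1
  have hqφ : ∀ a, q (φ a) = p a := fun a => (hq.liftFrom_spec (hmem a)).2
  have hrng' : ∀ a, Sg.rng (φ a) = φ₀ (Ω.rng a) := fun a => hrng a _ (hsrc a) (hqφ a)
  have hvert : ∀ w, Ω.IsVertex w → φ w = φ₀ w := fun w hw =>
    hq.liftFrom_eq ((hφ₀ w hw).1.trans (congrArg φ₀ hw).symm) (hφ₀ w hw).2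
  refine ⟨φ, ⟨fun a => ?_, fun a => ?_, fun a b hab => ?_, fun a => ?_⟩, hqφ, hvert⟩
  · rw [hvert _ (Ω.src_src a), hsrc]
  · rw [hvert _ (Ω.src_rng a), hrng']
  · have h : Sg.src (φ a) = Sg.rng (φ b) := by rw [hsrc, hrng', hab]
    exact hq.liftFrom_eq (by rw [Sg.src_comp _ _ h, hsrc, Ω.src_comp _ _ hab])
      (by rw [hq.hom.2.2.1 _ _ h, hqφ, hqφ, hp.2.2.1 _ _ hab])
  · rw [← hq.hom.2.2.2, hqφ, hp.2.2.2]

variable {FΛ : FundamentalGroupoid Λ} {FΩ : FundamentalGroupoid Ω} {FS : FundamentalGroupoid Sg}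
  {pst : FΩ.B → FΛ.B} {qst : FS.B → FΛ.B}

theorem image_pi1_subset_of_hom {φ : A' → A''} (hφ : IsKGraphHomFun Ω Sg φ)
    (hqφ : ∀ a, q (φ a) = p a) (hpst : IsGpdHomFun FΩ.G FΛ.G pst)
    (hpsti : ∀ a, pst (FΩ.i a) = FΛ.i (p a)) (hqst : IsGpdHomFun FS.G FΛ.G qst)
    (hqsti : ∀ a, qst (FS.i a) = FΛ.i (q a)) (v : A') :
    pst '' FΩ.pi1 v ⊆ qst '' FS.pi1 (φ v) := by
  obtain ⟨φst, hφst, hφsti⟩ := FΩ.exists_map FS hφ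
  have hcomp : qst ∘ φst = pst :=
    FΩ.hom_ext (hqst.comp hφst) hpst fun a => by simp [hφsti, hqsti, hqφ, hpsti]
  rintro _ ⟨g, ⟨hs, hr⟩, rfl⟩
  refine ⟨φst g, ⟨?_, ?_⟩, congrFun hcomp g⟩
  · rw [← hφst.1, hs, hφsti]
  · rw [← hφst.2.1, hr, hφsti]

theorem exists_hom_of_image_pi1_subset (hp : IsKGraphHomFun Ω Λ p) (hq : IsCovering Sg Λ q)
    (hΩ : Ω.Connected) (hpst : IsGpdHomFun FΩ.G FΛ.G pst)
    (hpsti : ∀ a, pst (FΩ.i a) = FΛ.i (p a)) (hqst : IsGpdHomFun FS.G FΛ.G qst)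
    (hqsti : ∀ a, qst (FS.i a) = FΛ.i (q a)) {v : A'} {u : A''} (hv : Ω.IsVertex v)
    (hu : Sg.IsVertex u) (hvu : p v = q u) (hsub : pst '' FΩ.pi1 v ⊆ qst '' FS.pi1 u) :
    ∃ φ : A' → A'', IsKGraphHomFun Ω Sg φ ∧ (∀ a, q (φ a) = p a) ∧ φ v = u := by
  obtain ⟨act, hact⟩ := hq.exists_correspondingAction FΛ
  have hsrc : ∀ {g}, FΩ.G.src g = FΩ.i v → FΛ.G.src (pst g) = FΛ.i (q u) := fun hg => by
    rw [← hpst.1, hg, hpsti, hvu]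
  have hwd : ∀ {g g'}, FΩ.G.src g = FΩ.i v → FΩ.G.src g' = FΩ.i v →
      FΩ.G.rng g = FΩ.G.rng g' → act (pst g) u = act (pst g') u := by
    intro g g' hg hg' hgg'
    have hd : FΩ.G.src (FΩ.G.inv g') = FΩ.G.rng g := by rw [FΩ.G.src_inv, hgg']
    set d := FΩ.G.comp (FΩ.G.inv g') g
    have hdv : d ∈ FΩ.pi1 v :=
      ⟨by rw [FΩ.G.src_comp _ _ hd, hg], by rw [FΩ.G.rng_comp _ _ hd, FΩ.G.rng_inv, hg']⟩
    have hg'd : FΩ.G.src g' = FΩ.G.rng d := hg'.trans hdv.2.symm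
    calc act (pst g) u = act (pst (FΩ.G.comp g' d)) u := by
          rw [FΩ.G.comp_inv_cancel_left hgg']
      _ = act (pst g') (act (pst d) u) := by
          rw [hpst.2.2 _ _ hg'd, hact.act_comp _ _ _ hu (hsrc hdv.1)
            (by rw [← hpst.1, ← hpst.2.1, hg'd])]
      _ = act (pst g') u := by
          rw [hact.act_eq_self_of_mem_image hqst hqsti hu (hsub ⟨d, hdv, rfl⟩)]
  have : Nonempty FΩ.B := ⟨FΩ.i v⟩
  let γ w := Classical.epsilon fun g => FΩ.G.src g = FΩ.i v ∧ FΩ.G.rng g = FΩ.i w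
  have hγ : ∀ {w}, Ω.IsVertex w → FΩ.G.src (γ w) = FΩ.i v ∧ FΩ.G.rng (γ w) = FΩ.i w :=
    fun hw => Classical.epsilon_spec (FΩ.exists_arrow_of_connected hΩ hv hw)
  have hfib : ∀ w, Ω.IsVertex w → act (pst (γ w)) u ∈ vertexFiber Sg q (p w) := fun w hw => by
    obtain ⟨hvert, hi⟩ := hact.act_vertex (pst (γ w)) u hu (hsrc (hγ hw).1)
    refine ⟨hvert, FΛ.i_injOn (hq.hom.isVertex hvert) (hp.isVertex hw) ?_⟩
    rw [hi, ← hpst.2.1, (hγ hw).2, hpsti]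
  have hlift : ∀ a b, Sg.src b = act (pst (γ (Ω.src a))) u → q b = p a →
      Sg.rng b = act (pst (γ (Ω.rng a))) u := fun a b hb hqb => by
    have hga : FΩ.G.src (FΩ.i a) = FΩ.G.rng (γ (Ω.src a)) := by
      rw [← FΩ.i_hom.1, (hγ (Ω.src_src a)).2]
    rw [← hact.act_cov b, hb, hqb, ← hpsti, ← hact.act_comp _ _ _ hu
      (hsrc (hγ (Ω.src_src a)).1) (by rw [← hpst.1, ← hpst.2.1, hga]), ← hpst.2.2 _ _ hga]
    exact hwd (by rw [FΩ.G.src_comp _ _ hga, (hγ (Ω.src_src a)).1]) (hγ (Ω.src_rng a)).1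
      (by rw [FΩ.G.rng_comp _ _ hga, ← FΩ.i_hom.2.1, (hγ (Ω.src_rng a)).2])
  obtain ⟨φ, hφ, hqφ, hφv⟩ := hq.exists_lift_of_vertexMap hp _ hfib hlift
  refine ⟨φ, hφ, hqφ, ?_⟩
  rw [hφv v hv, ← hwd (FΩ.isVertex_i hv) (hγ hv).1
    ((FΩ.rng_i_of_isVertex hv).trans (hγ hv).2.symm), hpsti, hvu]
  exact hact.act_id u hu

end Lifting

end

theorem covering_morphism_iff_subset_general {k : ℕ} {A A' A'' : Type}
    (Λ : KGraphStruct k A) (Ω : KGraphStruct k A') (Sg : KGraphStruct k A'')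
    (FΛ : FundamentalGroupoid Λ) (FΩ : FundamentalGroupoid Ω)
    (FS : FundamentalGroupoid Sg)
    (p : A' → A) (hp : IsCovering Ω Λ p) (hΩconn : Ω.Connected)
    (q : A'' → A) (hq : IsCovering Sg Λ q)
    (pst : FΩ.B → FΛ.B) (hpst : IsGpdHomFun FΩ.G FΛ.G pst)
    (hpsti : ∀ a, pst (FΩ.i a) = FΛ.i (p a))
    (qst : FS.B → FΛ.B) (hqst : IsGpdHomFun FS.G FΛ.G qst)
    (hqsti : ∀ a, qst (FS.i a) = FΛ.i (q a))
    (x : A)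
    (v : A') (hv : Ω.IsVertex v) (hpv : p v = x)
    (u : A'') (hu : Sg.IsVertex u) (hqu : q u = x) :
    (∃ φ : A' → A'', IsKGraphHomFun Ω Sg φ ∧ (∀ a, q (φ a) = p a) ∧ φ v = u)
      ↔ pst '' FΩ.pi1 v ⊆ qst '' FS.pi1 u := by
  constructor
  · rintro ⟨φ, hφ, hqφ, rfl⟩
    exact image_pi1_subset_of_hom hφ hqφ hpst hpsti hqst hqsti v
  · exact exists_hom_of_image_pi1_subset hp.hom hq hΩconn hpst hpsti hqst hqsti hv hu
      (hpv.trans hqu.symm)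

/-- For connected coverings `p : Ω → Λ`, `q : Σ → Λ` and
vertices `v ∈ p⁻¹(x)`, `u ∈ q⁻¹(x)`, there is a morphism of coverings
`(Ω,p) → (Σ,q)` taking `v` to `u` iff `p₊π(Ω,v) ⊆ q₊π(Σ,u)`. -/
theorem covering_morphism_iff_subset {k : ℕ} {A A' A'' : Type}
    (Λ : KGraphStruct k A) (Ω : KGraphStruct k A') (Sg : KGraphStruct k A'')
    (FΛ : FundamentalGroupoid Λ) (FΩ : FundamentalGroupoid Ω)
    (FS : FundamentalGroupoid Sg)
    (p : A' → A) (hp : IsCovering Ω Λ p) (hΩconn : Ω.Connected)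
    (q : A'' → A) (hq : IsCovering Sg Λ q) (hSconn : Sg.Connected)
    (pst : FΩ.B → FΛ.B) (hpst : IsGpdHomFun FΩ.G FΛ.G pst)
    (hpsti : ∀ a, pst (FΩ.i a) = FΛ.i (p a))
    (qst : FS.B → FΛ.B) (hqst : IsGpdHomFun FS.G FΛ.G qst)
    (hqsti : ∀ a, qst (FS.i a) = FΛ.i (q a))
    (x : A) (hx : Λ.IsVertex x)
    (v : A') (hv : Ω.IsVertex v) (hpv : p v = x)
    (u : A'') (hu : Sg.IsVertex u) (hqu : q u = x) :
    (∃ φ : A' → A'', IsKGraphHomFun Ω Sg φ ∧ (∀ a, q (φ a) = p a) ∧ φ v = u)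
      ↔ pst '' FΩ.pi1 v ⊆ qst '' FS.pi1 u :=
  covering_morphism_iff_subset_general Λ Ω Sg FΛ FΩ FS p hp hΩconn q hq pst hpst hpsti qst hqst
    hqsti x v hv hpv u hu hqu

end KGraphCovering
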